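/- arXiv:1104.1902 — 2 statements merged into one kernel-verified Lean document; each statement's English description precedes it below -/
import Mathlib

section
/- Let S be a numerical semigroup with multiplicity 3 and Kunz-coordinates vector (x_1, x_2) ∈ ℕ², and suppose S is not irreducible. Then S decomposes minimally into two irreducible numerical semigroups with multiplicity 3 as follows: if x_1 is odd and x_2 even, S = ⟨3, (3x_1+1)/2⟩ ∩ ⟨3, (3x_2+2)/2⟩; if x_1, x_2 are both odd, S = ⟨3, (3x_1+1)/2⟩ ∩ ⟨3, (3x_2+5)/2, 3x_2+2⟩; if x_1, x_2 are both even, S = ⟨3, 3x_1+1, (3x_1+4)/2⟩ ∩ ⟨3, (3x_2+2)/2⟩; if x_1 is even and x_2 odd, S = ⟨3, 3x_1+1, (3x_1+4)/2⟩ ∩ ⟨3, (3x_2+5)/2, 3x_2+2⟩. -/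
/-- A numerical semigroup: a subset of ℕ containing 0, closed under addition,
with finite complement. -/
def IsNumSgp (S : Set ℕ) : Prop :=
  0 ∈ S ∧ (∀ a ∈ S, ∀ b ∈ S, a + b ∈ S) ∧ (Sᶜ).Finite

/-- Multiplicity: least positive element. -/
noncomputable def nsMult (S : Set ℕ) : ℕ := sInf {n | n ∈ S ∧ 0 < n}

/-- Frobenius number: largest integer not in S. -/
noncomputable def nsFrob (S : Set ℕ) : ℕ := sSup Sᶜ

/-- Genus: number of gaps. -/
noncomputable def nsGenus (S : Set ℕ) : ℕ := Sᶜ.ncard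

/-- Special gaps of S. -/
def nsSG (S : Set ℕ) : Set ℕ := {h | h ∉ S ∧ IsNumSgp (S ∪ {h})}

/-- Special gaps of S larger than m. -/
def nsSGm (m : ℕ) (S : Set ℕ) : Set ℕ := {h ∈ nsSG S | m < h}

/-- S is irreducible: not an intersection of two numerical semigroups properly containing it. -/
def nsIrr (S : Set ℕ) : Prop :=
  ¬ ∃ T₁ T₂ : Set ℕ, IsNumSgp T₁ ∧ IsNumSgp T₂ ∧ S ⊂ T₁ ∧ S ⊂ T₂ ∧ S = T₁ ∩ T₂

/-- S is m-irreducible: not an intersection of two numerical semigroups of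
multiplicity m properly containing it. -/
def nsMIrr (m : ℕ) (S : Set ℕ) : Prop :=
  ¬ ∃ T₁ T₂ : Set ℕ, IsNumSgp T₁ ∧ IsNumSgp T₂ ∧ nsMult T₁ = m ∧ nsMult T₂ = m ∧
      S ⊂ T₁ ∧ S ⊂ T₂ ∧ S = T₁ ∩ T₂

/-- Symmetric: irreducible with odd Frobenius number. -/
def nsSym (S : Set ℕ) : Prop := nsIrr S ∧ Odd (nsFrob S)

/-- Pseudosymmetric: irreducible with even Frobenius number. -/
def nsPseudoSym (S : Set ℕ) : Prop := nsIrr S ∧ Even (nsFrob S)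

/-- m-symmetric: m-irreducible with odd Frobenius number. -/
def nsMSym (m : ℕ) (S : Set ℕ) : Prop := nsMIrr m S ∧ Odd (nsFrob S)

/-- m-pseudosymmetric: m-irreducible with even Frobenius number. -/
def nsMPseudoSym (m : ℕ) (S : Set ℕ) : Prop := nsMIrr m S ∧ Even (nsFrob S)

/-- The numerical semigroup (submonoid) generated by a set of naturals. -/
def nsGen (A : Set ℕ) : Set ℕ := (AddSubmonoid.closure A : Set ℕ)

/-- Apéry element: least element of S congruent to i mod m. -/
noncomputable def nsApery (S : Set ℕ) (m i : ℕ) : ℕ := sInf {s | s ∈ S ∧ s % m = i % m}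

/-- A decomposition of S into two irreducible numerical semigroups with
multiplicity 3. -/
def isIrrDecomp3 (S A B : Set ℕ) : Prop :=
  S = A ∩ B ∧ IsNumSgp A ∧ nsIrr A ∧ nsMult A = 3 ∧
    IsNumSgp B ∧ nsIrr B ∧ nsMult B = 3

/-!
A numerical semigroup of multiplicity 3 is determined by its Apéry elements `a ≡ 1` and
`b ≡ 2 (mod 3)`: it consists of the multiples of 3 and of the `n ≥ a` resp. `n ≥ b` in the
other two classes, and `b ≤ 2a`, `a ≤ 2b`. Its special gaps are among `a - 3` and `b - 3`,
which are special exactly when `b + 6 ≤ 2a` resp. `a + 6 ≤ 2b`. A semigroup with at most one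
special gap is irreducible, because every proper numerical oversemigroup contains a special
gap, namely its largest new element. Hence if `S` is not irreducible both inequalities hold.
Intersecting two such semigroups takes the maximum of each Apéry element, so `S` is the
intersection of the semigroups obtained by lowering `b` resp. `a` to roughly half of the
other Apéry element; these have a single special gap, and they are the ones in the statement.
-/

theorem IsNumSgp.exists_forall_ge_mem {S : Set ℕ} (hS : IsNumSgp S) :
    ∃ N, ∀ n, N ≤ n → n ∈ S := by
  obtain ⟨N, hN⟩ := hS.2.2.bddAbove
  exact ⟨N + 1, fun n hn => by_contra fun h => by have := hN h; omega⟩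

def IsNumSgp.toAddSubmonoid {S : Set ℕ} (hS : IsNumSgp S) : AddSubmonoid ℕ where
  carrier := S
  add_mem' {x y} hx hy := hS.2.1 x hx y hy
  zero_mem' := hS.1

theorem subset_nsGen {A : Set ℕ} : A ⊆ nsGen A := AddSubmonoid.subset_closure

theorem nsGen_subset {A T : Set ℕ} (hT : IsNumSgp T) (hA : A ⊆ T) : nsGen A ⊆ T :=
  fun _ hx => (AddSubmonoid.closure_le (S := hT.toAddSubmonoid)).2 hA hx

section Apery

variable {S : Set ℕ} {m i s : ℕ}

theorem nsMult_mem (hS : IsNumSgp S) : nsMult S ∈ S := by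
  obtain ⟨N, hN⟩ := hS.exists_forall_ge_mem
  exact (Nat.sInf_mem (s := {n | n ∈ S ∧ 0 < n}) ⟨N + 1, hN _ (by omega), by omega⟩).1

theorem nsMult_le (hs : s ∈ S) (hs0 : 0 < s) : nsMult S ≤ s :=
  Nat.sInf_le ⟨hs, hs0⟩

theorem nsApery_mem (hS : IsNumSgp S) (hm : 0 < m) :
    nsApery S m i ∈ S ∧ nsApery S m i % m = i % m := by
  obtain ⟨N, hN⟩ := hS.exists_forall_ge_mem
  have hne : {s | s ∈ S ∧ s % m = i % m}.Nonempty :=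
    ⟨m * N + i % m, hN _ ((Nat.le_mul_of_pos_left N hm).trans (Nat.le_add_right _ _)), by simp⟩
  exact Nat.sInf_mem hne

theorem nsApery_le (hs : s ∈ S) (h : s % m = i % m) : nsApery S m i ≤ s :=
  Nat.sInf_le ⟨hs, h⟩

end Apery

section SpecialGaps

variable {T T' : Set ℕ} {g s : ℕ}

theorem add_mem_of_mem_nsSG (hg : g ∈ nsSG T) (hs : s ∈ T) (hs0 : s ≠ 0) : g + s ∈ T :=
  (hg.2.2.1 g (Or.inr rfl) s (Or.inl hs)).resolve_right fun h => by
    have : g + s = g := h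
    omega

theorem add_self_mem_of_mem_nsSG (h0 : 0 ∈ T) (hg : g ∈ nsSG T) : g + g ∈ T :=
  (hg.2.2.1 g (Or.inr rfl) g (Or.inr rfl)).resolve_right fun h => hg.1 <| by
    obtain rfl : g = 0 := by
      have : g + g = g := h
      omega
    exact h0

theorem IsNumSgp.union_singleton_of_forall_le (hT : IsNumSgp T) (hT' : IsNumSgp T')
    (hsub : T ⊆ T') (hg : g ∈ T' \ T) (hmax : ∀ x ∈ T' \ T, x ≤ g) : IsNumSgp (T ∪ {g}) := by
  have hsub' : T ∪ {g} ⊆ T' := Set.union_subset hsub (Set.singleton_subset_iff.2 hg.1)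
  refine ⟨Or.inl hT.1, fun x hx y hy => ?_,
    hT.2.2.subset (Set.compl_subset_compl.2 Set.subset_union_left)⟩
  by_cases hxy : x + y ∈ T
  · exact Or.inl hxy
  have hle := hmax _ ⟨hT'.2.1 x (hsub' hx) y (hsub' hy), hxy⟩
  refine Or.inr (Set.mem_singleton_iff.2 ?_)
  rcases hx with hx | rfl
  · rcases hy with hy | rfl
    · exact absurd (hT.2.1 x hx y hy) hxy
    · omega
  · omega

theorem exists_mem_nsSG_of_ssubset (hT : IsNumSgp T) (hT' : IsNumSgp T') (h : T ⊂ T') :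
    ∃ g ∈ nsSG T, g ∈ T' := by
  have hfin : (T' \ T).Finite := hT.2.2.subset fun _ hx => hx.2
  have hg := (Set.nonempty_of_ssubset h).csSup_mem hfin
  exact ⟨_, ⟨hg.2, hT.union_singleton_of_forall_le hT' h.1 hg
    fun _ hx => le_csSup hfin.bddAbove hx⟩, hg.1⟩

theorem nsIrr_of_subsingleton_nsSG (hT : IsNumSgp T) (h : (nsSG T).Subsingleton) : nsIrr T := by
  rintro ⟨T₁, T₂, hT₁, hT₂, hsub₁, hsub₂, heq⟩
  obtain ⟨g₁, hg₁, hg₁T⟩ := exists_mem_nsSG_of_ssubset hT hT₁ hsub₁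
  obtain ⟨g₂, hg₂, hg₂T⟩ := exists_mem_nsSG_of_ssubset hT hT₂ hsub₂
  exact hg₁.1 (heq ▸ ⟨hg₁T, h hg₁ hg₂ ▸ hg₂T⟩)

end SpecialGaps

/-- The numerical semigroup of multiplicity 3 with Apéry elements `a` and `b`, provided
`a % 3 = 1`, `b % 3 = 2`, `b ≤ 2 * a`, `a ≤ 2 * b` and `3 < a, b`. -/
def mult3Sgp (a b : ℕ) : Set ℕ :=
  {n | n % 3 = 0 ∨ (n % 3 = 1 ∧ a ≤ n) ∨ (n % 3 = 2 ∧ b ≤ n)}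

section Mult3Sgp

variable {a b a' b' c : ℕ}

theorem mem_mult3Sgp {n : ℕ} :
    n ∈ mult3Sgp a b ↔ n % 3 = 0 ∨ (n % 3 = 1 ∧ a ≤ n) ∨ (n % 3 = 2 ∧ b ≤ n) :=
  Iff.rfl

theorem mult3Sgp_subset (M : AddSubmonoid ℕ) (ha3 : a % 3 = 1) (hb3 : b % 3 = 2) (h3 : 3 ∈ M)
    (ha : a ∈ M) (hb : b ∈ M) : mult3Sgp a b ⊆ M := by
  have shift : ∀ s ∈ M, ∀ k, s + 3 * k ∈ M := fun s hs k =>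
    M.add_mem hs (by simpa [mul_comm] using M.nsmul_mem h3 k)
  rintro n (h | ⟨h, hle⟩ | ⟨h, hle⟩)
  · obtain ⟨k, rfl⟩ : ∃ k, n = 0 + 3 * k := ⟨n / 3, by omega⟩
    exact shift 0 M.zero_mem k
  · obtain ⟨k, rfl⟩ : ∃ k, n = a + 3 * k := ⟨(n - a) / 3, by omega⟩
    exact shift a ha k
  · obtain ⟨k, rfl⟩ : ∃ k, n = b + 3 * k := ⟨(n - b) / 3, by omega⟩
    exact shift b hb k

theorem isNumSgp_mult3Sgp (hba : b ≤ 2 * a) (hab : a ≤ 2 * b) : IsNumSgp (mult3Sgp a b) := by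
  refine ⟨Or.inl rfl, fun x hx y hy => ?_, (Set.finite_Iio (a + b)).subset fun n hn => ?_⟩
  · simp only [mem_mult3Sgp] at hx hy ⊢
    omega
  · simp only [mem_mult3Sgp, Set.mem_compl_iff] at hn
    simp only [Set.mem_Iio]
    omega

theorem nsMult_mult3Sgp (ha : 1 < a) (hb : 2 < b) : nsMult (mult3Sgp a b) = 3 := by
  refine le_antisymm (nsMult_le (Or.inl rfl) three_pos) (le_csInf ⟨3, Or.inl rfl, three_pos⟩ ?_)
  rintro n ⟨hn, hn0⟩
  simp only [mem_mult3Sgp] at hn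
  omega

theorem mult3Sgp_inter_mult3Sgp :
    mult3Sgp a b ∩ mult3Sgp a' b' = mult3Sgp (max a a') (max b b') := by
  ext n
  simp only [mem_mult3Sgp, Set.mem_inter_iff]
  omega

theorem nsIrr_mult3Sgp (hT : IsNumSgp (mult3Sgp a b)) (ha3 : a % 3 = 1) (hb3 : b % 3 = 2)
    (h : 2 * a < b + 6 ∨ 2 * b < a + 6) : nsIrr (mult3Sgp a b) := by
  refine nsIrr_of_subsingleton_nsSG hT fun g₁ hg₁ g₂ hg₂ => ?_
  have h3 : 3 ∈ mult3Sgp a b := Or.inl rfl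
  have hg₁3 := add_mem_of_mem_nsSG hg₁ h3 three_ne_zero
  have hg₂3 := add_mem_of_mem_nsSG hg₂ h3 three_ne_zero
  have hg₁₁ := add_self_mem_of_mem_nsSG hT.1 hg₁
  have hg₂₂ := add_self_mem_of_mem_nsSG hT.1 hg₂
  have hg₁' := hg₁.1
  have hg₂' := hg₂.1
  simp only [mem_mult3Sgp] at hg₁3 hg₂3 hg₁₁ hg₂₂ hg₁' hg₂'
  omega

theorem eq_mult3Sgp_nsApery {S : Set ℕ} (hS : IsNumSgp S) (hm : nsMult S = 3) :
    S = mult3Sgp (nsApery S 3 1) (nsApery S 3 2) := by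
  have h3 : 3 ∈ S := hm ▸ nsMult_mem hS
  obtain ⟨ha, ha3⟩ := nsApery_mem (i := 1) hS three_pos
  obtain ⟨hb, hb3⟩ := nsApery_mem (i := 2) hS three_pos
  refine subset_antisymm (fun n hn => ?_) (mult3Sgp_subset hS.toAddSubmonoid ha3 hb3 h3 ha hb)
  rcases (by omega : n % 3 = 0 ∨ n % 3 = 1 ∨ n % 3 = 2) with h | h | h
  · exact Or.inl h
  · exact Or.inr (Or.inl ⟨h, nsApery_le hn h⟩)
  · exact Or.inr (Or.inr ⟨h, nsApery_le hn h⟩)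

theorem nsGen_eq_mult3Sgp_of_subset {A : Set ℕ} (ha3 : a % 3 = 1) (hb3 : b % 3 = 2)
    (hba : b ≤ 2 * a) (hab : a ≤ 2 * b) (hA : A ⊆ mult3Sgp a b) (h3 : 3 ∈ nsGen A)
    (ha : a ∈ nsGen A) (hb : b ∈ nsGen A) : nsGen A = mult3Sgp a b :=
  subset_antisymm (nsGen_subset (isNumSgp_mult3Sgp hba hab) hA)
    (mult3Sgp_subset (AddSubmonoid.closure A) ha3 hb3 h3 ha hb)

theorem nsGen_triple_eq_mult3Sgp (ha3 : a % 3 = 1) (hb3 : b % 3 = 2) (hba : b ≤ 2 * a)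
    (hab : a ≤ 2 * b) : nsGen {3, a, b} = mult3Sgp a b := by
  refine nsGen_eq_mult3Sgp_of_subset ha3 hb3 hba hab ?_ (subset_nsGen (by simp))
    (subset_nsGen (by simp)) (subset_nsGen (by simp))
  rintro x (rfl | rfl | rfl) <;> rw [mem_mult3Sgp] <;> omega

theorem nsGen_pair_eq_mult3Sgp_of_mod_one (hc : c % 3 = 1) (hb : 2 * c = b) :
    nsGen {3, c} = mult3Sgp c b := by
  have hcA : c ∈ nsGen {3, c} := subset_nsGen (by simp)
  refine nsGen_eq_mult3Sgp_of_subset hc (by omega) (by omega) (by omega) ?_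
    (subset_nsGen (by simp)) hcA (hb ▸ two_mul c ▸ (AddSubmonoid.closure _).add_mem hcA hcA)
  rintro x (rfl | rfl) <;> rw [mem_mult3Sgp] <;> omega

theorem nsGen_pair_eq_mult3Sgp_of_mod_two (hc : c % 3 = 2) (ha : 2 * c = a) :
    nsGen {3, c} = mult3Sgp a c := by
  have hcA : c ∈ nsGen {3, c} := subset_nsGen (by simp)
  refine nsGen_eq_mult3Sgp_of_subset (by omega) hc (by omega) (by omega) ?_
    (subset_nsGen (by simp)) (ha ▸ two_mul c ▸ (AddSubmonoid.closure _).add_mem hcA hcA) hcA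
  rintro x (rfl | rfl) <;> rw [mem_mult3Sgp] <;> omega

theorem isIrrDecomp3_mult3Sgp {S A B : Set ℕ} (hS : S = mult3Sgp a b) (hA : A = mult3Sgp a b')
    (hB : B = mult3Sgp a' b) (ha3 : a % 3 = 1) (hb3 : b % 3 = 2) (ha3' : a' % 3 = 1)
    (hb3' : b' % 3 = 2) (hA₁ : a ≤ 2 * b') (hA₂ : 2 * b' < a + 6) (hB₁ : b ≤ 2 * a')
    (hB₂ : 2 * a' < b + 6) (ha' : a' ≤ a) (hb' : b' ≤ b) (ha'1 : 1 < a') (hb'2 : 2 < b') :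
    isIrrDecomp3 S A B := by
  subst hS hA hB
  have hnsA := isNumSgp_mult3Sgp (a := a) (b := b') (by omega) hA₁
  have hnsB := isNumSgp_mult3Sgp (a := a') (b := b) hB₁ (by omega)
  refine ⟨?_, hnsA, nsIrr_mult3Sgp hnsA ha3 hb3' (Or.inr hA₂), nsMult_mult3Sgp (by omega) hb'2,
    hnsB, nsIrr_mult3Sgp hnsB ha3' hb3 (Or.inl hB₂), nsMult_mult3Sgp ha'1 (by omega)⟩
  rw [mult3Sgp_inter_mult3Sgp, max_eq_left ha', max_eq_right hb']

end Mult3Sgp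

/-- explicit minimal decomposition of a non-irreducible
numerical semigroup of multiplicity 3 into two irreducible numerical
semigroups of multiplicity 3, according to the parities of the Kunz
coordinates. -/
theorem stmt10 (S : Set ℕ) (x1 x2 : ℕ) (hS : IsNumSgp S) (hm : nsMult S = 3)
    (h1 : nsApery S 3 1 = 3 * x1 + 1) (h2 : nsApery S 3 2 = 3 * x2 + 2)
    (hni : ¬ nsIrr S) :
    (Odd x1 → Even x2 →
      isIrrDecomp3 S (nsGen {3, (3 * x1 + 1) / 2}) (nsGen {3, (3 * x2 + 2) / 2})) ∧
    (Odd x1 → Odd x2 →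
      isIrrDecomp3 S (nsGen {3, (3 * x1 + 1) / 2})
        (nsGen {3, (3 * x2 + 5) / 2, 3 * x2 + 2})) ∧
    (Even x1 → Even x2 →
      isIrrDecomp3 S (nsGen {3, 3 * x1 + 1, (3 * x1 + 4) / 2})
        (nsGen {3, (3 * x2 + 2) / 2})) ∧
    (Even x1 → Odd x2 →
      isIrrDecomp3 S (nsGen {3, 3 * x1 + 1, (3 * x1 + 4) / 2})
        (nsGen {3, (3 * x2 + 5) / 2, 3 * x2 + 2})) := by
  have hSeq : S = mult3Sgp (3 * x1 + 1) (3 * x2 + 2) := h1 ▸ h2 ▸ eq_mult3Sgp_nsApery hS hm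
  have hred : x2 + 2 ≤ 2 * x1 ∧ x1 + 1 ≤ 2 * x2 := by
    by_contra hcon
    exact hni (hSeq ▸ nsIrr_mult3Sgp (hSeq ▸ hS) (by omega) (by omega) (by omega))
  refine ⟨?_, ?_, ?_, ?_⟩ <;> rintro ⟨j, rfl⟩ ⟨k, rfl⟩
  · apply isIrrDecomp3_mult3Sgp hSeq (nsGen_pair_eq_mult3Sgp_of_mod_two ?_ ?_)
      (nsGen_pair_eq_mult3Sgp_of_mod_one ?_ ?_) <;> omega
  · apply isIrrDecomp3_mult3Sgp hSeq (nsGen_pair_eq_mult3Sgp_of_mod_two ?_ ?_)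
      (nsGen_triple_eq_mult3Sgp ?_ ?_ ?_ ?_) <;> omega
  · apply isIrrDecomp3_mult3Sgp hSeq (nsGen_triple_eq_mult3Sgp ?_ ?_ ?_ ?_)
      (nsGen_pair_eq_mult3Sgp_of_mod_one ?_ ?_) <;> omega
  · apply isIrrDecomp3_mult3Sgp hSeq (nsGen_triple_eq_mult3Sgp ?_ ?_ ?_ ?_)
      (nsGen_triple_eq_mult3Sgp ?_ ?_ ?_ ?_) <;> omega
end

section
/- Let S be a numerical semigroup with multiplicity 3 and Kunz-coordinates vector (x_1, x_2). Then S is an intersection of pseudosymmetric numerical semigroups with multiplicity 3 if and only if either S is 3-pseudosymmetric, or S is not 3-irreducible with x_1 even and x_2 odd. -/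
/-!
A numerical semigroup of multiplicity 3 is determined by its Kunz coordinates `(a, b)`, the lattice
points of the cone `1 ≤ a`, `1 ≤ b`, `b ≤ 2a`, `a ≤ 2b + 1`, and intersecting semigroups takes the
coordinatewise maximum. Hence `S` is 3-reducible exactly when both `(a - 1, b)` and `(a, b - 1)`
are still admissible, and the Frobenius number `max (3a - 2) (3b - 1)` shows that the
pseudosymmetric ones, 3-pseudosymmetric or not, are exactly the points on the two boundary lines
`b = 2a - 1` and `a = 2b`.

If `S` is an intersection of such semigroups, the gaps `3a - 2` and `3b - 1` of `S` must be gaps of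
members, which forces members `(a, d)` and `(c, b)` on the lines with `c ≤ a`, `d ≤ b`. Unless `S`
is itself on a line, this needs `a = 2d` and `b = 2c - 1`; conversely, for `a` even and `b` odd
these two points intersect to `S`.
-/

theorem nsApery_mod (S : Set ℕ) (m i : ℕ) : nsApery S m (i % m) = nsApery S m i := by
  simp only [nsApery, Nat.mod_mod]

namespace IsNumSgp

variable {S : Set ℕ}

theorem exists_forall_le_mem (hS : IsNumSgp S) : ∃ N, ∀ n, N ≤ n → n ∈ S := by
  obtain ⟨N, hN⟩ := hS.2.2.bddAbove
  exact ⟨N + 1, fun n hn => by_contra fun hnS => by have := hN hnS; omega⟩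

theorem add_mul_mem (hS : IsNumSgp S) {s m : ℕ} (hs : s ∈ S) (hm : m ∈ S) (k : ℕ) :
    s + m * k ∈ S := by
  induction k with
  | zero => simpa using hs
  | succ k ih => simpa [Nat.mul_succ, ← add_assoc] using hS.2.1 _ ih m hm

theorem nsMult_mem (hS : IsNumSgp S) : nsMult S ∈ S := by
  obtain ⟨N, hN⟩ := hS.exists_forall_le_mem
  exact (Nat.sInf_mem (⟨N + 1, hN _ (by omega), by omega⟩ : {n | n ∈ S ∧ 0 < n}.Nonempty)).1

theorem nsApery_mem (hS : IsNumSgp S) {m : ℕ} (hm : 0 < m) (i : ℕ) :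
    nsApery S m i ∈ S ∧ nsApery S m i % m = i % m := by
  obtain ⟨N, hN⟩ := hS.exists_forall_le_mem
  have hN' : N ≤ i % m + m * N := le_add_left (Nat.le_mul_of_pos_left N hm)
  exact Nat.sInf_mem (⟨i % m + m * N, hN _ hN', by simp⟩ : {s | s ∈ S ∧ s % m = i % m}.Nonempty)

theorem nsApery_zero (hS : IsNumSgp S) (m : ℕ) : nsApery S m 0 = 0 :=
  Nat.eq_zero_of_le_zero (Nat.sInf_le ⟨hS.1, rfl⟩)

theorem mem_iff_nsApery_le (hS : IsNumSgp S) {m n : ℕ} (hm : m ∈ S) (hm0 : 0 < m) :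
    n ∈ S ↔ nsApery S m n ≤ n := by
  refine ⟨fun hn => Nat.sInf_le ⟨hn, rfl⟩, fun hle => ?_⟩
  obtain ⟨hwS, hwmod⟩ := hS.nsApery_mem hm0 n
  obtain ⟨k, hk⟩ := (Nat.modEq_iff_dvd' hle).mp hwmod
  have hn : n = nsApery S m n + m * k := by omega
  exact hn ▸ hS.add_mul_mem hwS hm k

end IsNumSgp

theorem nsMIrr_of_nsIrr {S : Set ℕ} (m : ℕ) (h : nsIrr S) : nsMIrr m S :=
  fun ⟨T₁, T₂, hT₁, hT₂, _, _, hs⟩ => h ⟨T₁, T₂, hT₁, hT₂, hs⟩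

/-- Any proper numerical oversemigroup contains a gap `g`, hence `F - g` or `g` itself with
`2g = F`, and so contains the Frobenius number `F`. -/
theorem nsIrr_of_forall_not_mem {S : Set ℕ} (hfin : Sᶜ.Finite)
    (hpair : ∀ g ∉ S, 2 * g = nsFrob S ∨ nsFrob S - g ∈ S) : nsIrr S := by
  have frob_mem : ∀ T, IsNumSgp T → S ⊂ T → nsFrob S ∈ T ∧ nsFrob S ∉ S := by
    intro T hT hST
    obtain ⟨g, hgT, hgS⟩ := Set.exists_of_ssubset hST
    have hgF : g ≤ nsFrob S := le_csSup hfin.bddAbove hgS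
    refine ⟨?_, Nat.sSup_mem ⟨g, hgS⟩ hfin.bddAbove⟩
    rcases hpair g hgS with h | h
    · simpa [← two_mul, h] using hT.2.1 g hgT g hgT
    · simpa [Nat.add_sub_cancel' hgF] using hT.2.1 g hgT _ (hST.subset h)
  rintro ⟨T₁, T₂, hT₁, hT₂, hs₁, hs₂, rfl⟩
  exact (frob_mem T₁ hT₁ hs₁).2 ⟨(frob_mem T₁ hT₁ hs₁).1, (frob_mem T₂ hT₂ hs₂).1⟩

def kunzSgp (a b : ℕ) : Set ℕ :=
  {n | n % 3 = 0 ∨ (n % 3 = 1 ∧ 3 * a + 1 ≤ n) ∨ (n % 3 = 2 ∧ 3 * b + 2 ≤ n)}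

/-- The Kunz polytope for multiplicity `3`, see `kunzAdmissible_iff`. -/
def KunzAdmissible (a b : ℕ) : Prop :=
  1 ≤ a ∧ 1 ≤ b ∧ b ≤ 2 * a ∧ a ≤ 2 * b + 1

section Kunz

variable {a b c d : ℕ}

theorem mem_kunzSgp {n : ℕ} :
    n ∈ kunzSgp a b ↔ n % 3 = 0 ∨ (n % 3 = 1 ∧ 3 * a + 1 ≤ n) ∨ (n % 3 = 2 ∧ 3 * b + 2 ≤ n) :=
  Iff.rfl

theorem kunzSgp_subset_kunzSgp_iff : kunzSgp a b ⊆ kunzSgp c d ↔ c ≤ a ∧ d ≤ b := by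
  refine ⟨fun h => ?_, fun h n => by simp only [mem_kunzSgp]; omega⟩
  have h₁ := h (show 3 * a + 1 ∈ kunzSgp a b by simp only [mem_kunzSgp]; omega)
  have h₂ := h (show 3 * b + 2 ∈ kunzSgp a b by simp only [mem_kunzSgp]; omega)
  simp only [mem_kunzSgp] at h₁ h₂
  omega

theorem kunzSgp_inj : kunzSgp a b = kunzSgp c d ↔ a = c ∧ b = d := by
  simp only [subset_antisymm_iff, kunzSgp_subset_kunzSgp_iff]
  omega

theorem kunzSgp_ssubset_kunzSgp_iff :
    kunzSgp a b ⊂ kunzSgp c d ↔ c ≤ a ∧ d ≤ b ∧ ¬(c = a ∧ d = b) := by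
  rw [ssubset_iff_subset_ne, kunzSgp_subset_kunzSgp_iff, Ne, kunzSgp_inj]
  omega

theorem kunzSgp_inter_kunzSgp :
    kunzSgp a b ∩ kunzSgp c d = kunzSgp (max a c) (max b d) := by
  ext n
  simp only [Set.mem_inter_iff, mem_kunzSgp]
  omega

theorem kunzAdmissible_iff :
    KunzAdmissible a b ↔ IsNumSgp (kunzSgp a b) ∧ nsMult (kunzSgp a b) = 3 := by
  constructor
  · rintro ⟨ha, hb, hba, hab⟩
    refine ⟨⟨by simp [mem_kunzSgp], fun m hm n hn => ?_, ?_⟩, ?_⟩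
    · simp only [mem_kunzSgp] at *
      omega
    · refine (Set.finite_Iio (3 * a + 3 * b)).subset fun n hn => ?_
      simp only [Set.mem_compl_iff, mem_kunzSgp, Set.mem_Iio] at *
      omega
    · refine le_antisymm (Nat.sInf_le ⟨by simp [mem_kunzSgp], by omega⟩)
        (le_csInf ⟨3, by simp [mem_kunzSgp]⟩ fun n ⟨hn, hn0⟩ => ?_)
      simp only [mem_kunzSgp] at hn
      omega
  · rintro ⟨hS, hm⟩
    have hlt : ∀ n, 0 < n → n ∈ kunzSgp a b → 3 ≤ n := fun n hn0 hn =>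
      hm ▸ Nat.sInf_le ⟨hn, hn0⟩
    have h₁ := hS.2.1 (3 * a + 1) (by simp only [mem_kunzSgp]; omega) (3 * a + 1)
      (by simp only [mem_kunzSgp]; omega)
    have h₂ := hS.2.1 (3 * b + 2) (by simp only [mem_kunzSgp]; omega) (3 * b + 2)
      (by simp only [mem_kunzSgp]; omega)
    have h₃ : 1 ∉ kunzSgp a b := fun h => absurd (hlt 1 one_pos h) (by norm_num)
    have h₄ : 2 ∉ kunzSgp a b := fun h => absurd (hlt 2 two_pos h) (by norm_num)
    simp only [mem_kunzSgp, true_and] at h₁ h₂ h₃ h₄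
    unfold KunzAdmissible
    omega

theorem eq_kunzSgp_of_nsApery {S : Set ℕ} (hS : IsNumSgp S) (h3 : 3 ∈ S)
    (h₁ : nsApery S 3 1 = 3 * a + 1) (h₂ : nsApery S 3 2 = 3 * b + 2) : S = kunzSgp a b := by
  ext n
  rw [hS.mem_iff_nsApery_le h3 three_pos, mem_kunzSgp, ← nsApery_mod]
  obtain h | h | h : n % 3 = 0 ∨ n % 3 = 1 ∨ n % 3 = 2 := by omega
  all_goals rw [h]
  · simp [hS.nsApery_zero]
  · rw [h₁]; omega
  · rw [h₂]; omega

theorem exists_kunzAdmissible_eq_kunzSgp {S : Set ℕ} (hS : IsNumSgp S) (hm : nsMult S = 3) :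
    ∃ a b, KunzAdmissible a b ∧ S = kunzSgp a b := by
  obtain ⟨-, h₁⟩ := hS.nsApery_mem three_pos 1
  obtain ⟨-, h₂⟩ := hS.nsApery_mem three_pos 2
  have hS_eq := eq_kunzSgp_of_nsApery hS (hm ▸ hS.nsMult_mem)
    (a := nsApery S 3 1 / 3) (b := nsApery S 3 2 / 3) (by omega) (by omega)
  refine ⟨_, _, kunzAdmissible_iff.mpr ?_, hS_eq⟩
  rw [← hS_eq]
  exact ⟨hS, hm⟩

theorem nsFrob_kunzSgp (ha : 1 ≤ a) : nsFrob (kunzSgp a b) = max (3 * a - 2) (3 * b - 1) := by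
  refine IsGreatest.csSup_eq ⟨?_, fun n hn => ?_⟩
  · simp only [Set.mem_compl_iff, mem_kunzSgp]
    omega
  · simp only [Set.mem_compl_iff, mem_kunzSgp] at hn
    omega

theorem not_nsMIrr_three_kunzSgp_iff (h : KunzAdmissible a b) :
    ¬ nsMIrr 3 (kunzSgp a b) ↔ KunzAdmissible (a - 1) b ∧ KunzAdmissible a (b - 1) := by
  rw [nsMIrr, not_not]
  constructor
  · rintro ⟨T₁, T₂, hT₁, hT₂, hm₁, hm₂, hs₁, hs₂, heq⟩
    obtain ⟨p₁, q₁, hpq₁, rfl⟩ := exists_kunzAdmissible_eq_kunzSgp hT₁ hm₁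
    obtain ⟨p₂, q₂, hpq₂, rfl⟩ := exists_kunzAdmissible_eq_kunzSgp hT₂ hm₂
    rw [kunzSgp_ssubset_kunzSgp_iff] at hs₁ hs₂
    rw [kunzSgp_inter_kunzSgp, kunzSgp_inj] at heq
    unfold KunzAdmissible at *
    omega
  · rintro ⟨h₁, h₂⟩
    obtain ⟨hS₁, hm₁⟩ := kunzAdmissible_iff.mp h₁
    obtain ⟨hS₂, hm₂⟩ := kunzAdmissible_iff.mp h₂
    refine ⟨_, _, hS₁, hS₂, hm₁, hm₂, ?_, ?_, ?_⟩
    · rw [kunzSgp_ssubset_kunzSgp_iff]; unfold KunzAdmissible at *; omega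
    · rw [kunzSgp_ssubset_kunzSgp_iff]; unfold KunzAdmissible at *; omega
    · rw [kunzSgp_inter_kunzSgp, kunzSgp_inj]; omega

theorem nsPseudoSym_kunzSgp_of_line (h : KunzAdmissible a b) (hl : b + 1 = 2 * a ∨ a = 2 * b) :
    nsPseudoSym (kunzSgp a b) := by
  have hF := nsFrob_kunzSgp (b := b) h.1
  refine ⟨nsIrr_of_forall_not_mem (kunzAdmissible_iff.mp h).1.2.2 fun g hg => ?_, ?_⟩
  · simp only [hF, mem_kunzSgp] at hg ⊢
    unfold KunzAdmissible at h
    omega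
  · rw [hF, Nat.even_iff]
    unfold KunzAdmissible at h
    omega

theorem line_of_nsMPseudoSym_three_kunzSgp (h : KunzAdmissible a b)
    (hp : nsMPseudoSym 3 (kunzSgp a b)) : b + 1 = 2 * a ∨ a = 2 * b := by
  obtain ⟨hirr, heven⟩ := hp
  rw [← not_not (a := nsMIrr _ _), not_nsMIrr_three_kunzSgp_iff h] at hirr
  rw [nsFrob_kunzSgp h.1, Nat.even_iff] at heven
  unfold KunzAdmissible at *
  omega

theorem nsMPseudoSym_three_kunzSgp_iff (h : KunzAdmissible a b) :
    nsMPseudoSym 3 (kunzSgp a b) ↔ b + 1 = 2 * a ∨ a = 2 * b := by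
  refine ⟨line_of_nsMPseudoSym_three_kunzSgp h, fun hl => ?_⟩
  obtain ⟨hirr, heven⟩ := nsPseudoSym_kunzSgp_of_line h hl
  exact ⟨nsMIrr_of_nsIrr 3 hirr, heven⟩

theorem nsPseudoSym_kunzSgp_iff (h : KunzAdmissible a b) :
    nsPseudoSym (kunzSgp a b) ↔ b + 1 = 2 * a ∨ a = 2 * b := by
  refine ⟨fun ⟨hirr, heven⟩ => ?_, nsPseudoSym_kunzSgp_of_line h⟩
  exact line_of_nsMPseudoSym_three_kunzSgp h ⟨nsMIrr_of_nsIrr 3 hirr, heven⟩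

theorem exists_kunzSgp_of_pseudoSym_superset {T : Set ℕ}
    (hT : IsNumSgp T ∧ nsMult T = 3 ∧ nsPseudoSym T) (hsub : kunzSgp a b ⊆ T) :
    ∃ c d, T = kunzSgp c d ∧ c ≤ a ∧ d ≤ b ∧ (d + 1 = 2 * c ∨ c = 2 * d) := by
  obtain ⟨hS, hm, hp⟩ := hT
  obtain ⟨c, d, hcd, rfl⟩ := exists_kunzAdmissible_eq_kunzSgp hS hm
  obtain ⟨hca, hdb⟩ := kunzSgp_subset_kunzSgp_iff.mp hsub
  exact ⟨c, d, rfl, hca, hdb, (nsPseudoSym_kunzSgp_iff hcd).mp hp⟩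

theorem line_or_of_kunzSgp_eq_sInter (h : KunzAdmissible a b) {F : Set (Set ℕ)}
    (hF : ∀ T ∈ F, IsNumSgp T ∧ nsMult T = 3 ∧ nsPseudoSym T) (heq : kunzSgp a b = ⋂₀ F) :
    (b + 1 = 2 * a ∨ a = 2 * b) ∨
      ((KunzAdmissible (a - 1) b ∧ KunzAdmissible a (b - 1)) ∧ Even a ∧ Odd b) := by
  have member_avoiding : ∀ n ∉ kunzSgp a b, ∃ c d, n ∉ kunzSgp c d ∧ c ≤ a ∧ d ≤ b ∧
      (d + 1 = 2 * c ∨ c = 2 * d) := by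
    intro n hn
    rw [heq, Set.mem_sInter] at hn
    push Not at hn
    obtain ⟨T, hTF, hnT⟩ := hn
    obtain ⟨c, d, rfl, hcd⟩ :=
      exists_kunzSgp_of_pseudoSym_superset (hF T hTF) (heq ▸ Set.sInter_subset_of_mem hTF)
    exact ⟨c, d, hnT, hcd⟩
  obtain ⟨c₁, d₁, hn₁, hc₁, hd₁, hl₁⟩ :=
    member_avoiding (3 * a - 2) (by simp only [mem_kunzSgp]; unfold KunzAdmissible at h; omega)
  obtain ⟨c₂, d₂, hn₂, hc₂, hd₂, hl₂⟩ :=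
    member_avoiding (3 * b - 1) (by simp only [mem_kunzSgp]; unfold KunzAdmissible at h; omega)
  simp only [mem_kunzSgp] at hn₁ hn₂
  simp only [Nat.even_iff, Nat.odd_iff]
  unfold KunzAdmissible at *
  omega

theorem exists_pseudoSym_sInter_eq_kunzSgp (h : KunzAdmissible a b)
    (hab : (b + 1 = 2 * a ∨ a = 2 * b) ∨
      ((KunzAdmissible (a - 1) b ∧ KunzAdmissible a (b - 1)) ∧ Even a ∧ Odd b)) :
    ∃ F : Set (Set ℕ), F.Nonempty ∧ F.Finite ∧
      (∀ T ∈ F, IsNumSgp T ∧ nsMult T = 3 ∧ nsPseudoSym T) ∧ kunzSgp a b = ⋂₀ F := by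
  have on_line : ∀ {c d}, KunzAdmissible c d → (d + 1 = 2 * c ∨ c = 2 * d) →
      IsNumSgp (kunzSgp c d) ∧ nsMult (kunzSgp c d) = 3 ∧ nsPseudoSym (kunzSgp c d) :=
    fun hcd hl => ⟨(kunzAdmissible_iff.mp hcd).1, (kunzAdmissible_iff.mp hcd).2,
      nsPseudoSym_kunzSgp_of_line hcd hl⟩
  rcases hab with hl | ⟨⟨h₁, h₂⟩, ⟨s, rfl⟩, ⟨t, rfl⟩⟩
  · exact ⟨{kunzSgp a b}, Set.singleton_nonempty _, Set.finite_singleton _,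
      by simpa using on_line h hl, (Set.sInter_singleton _).symm⟩
  · unfold KunzAdmissible at h₁ h₂
    refine ⟨{kunzSgp (t + 1) (2 * t + 1), kunzSgp (s + s) s}, Set.insert_nonempty _ _,
      Set.toFinite _, ?_, ?_⟩
    · simp only [Set.mem_insert_iff, Set.mem_singleton_iff, forall_eq_or_imp, forall_eq]
      exact ⟨on_line ⟨by omega, by omega, by omega, by omega⟩ (by omega),
        on_line ⟨by omega, by omega, by omega, by omega⟩ (by omega)⟩
    · rw [Set.sInter_pair, kunzSgp_inter_kunzSgp, kunzSgp_inj]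
      omega

theorem exists_pseudoSym_sInter_eq_kunzSgp_iff (h : KunzAdmissible a b) :
    (∃ F : Set (Set ℕ), F.Nonempty ∧ F.Finite ∧
      (∀ T ∈ F, IsNumSgp T ∧ nsMult T = 3 ∧ nsPseudoSym T) ∧ kunzSgp a b = ⋂₀ F) ↔
    (b + 1 = 2 * a ∨ a = 2 * b) ∨
      ((KunzAdmissible (a - 1) b ∧ KunzAdmissible a (b - 1)) ∧ Even a ∧ Odd b) :=
  ⟨fun ⟨_, _, _, hF, heq⟩ => line_or_of_kunzSgp_eq_sInter h hF heq,
    exists_pseudoSym_sInter_eq_kunzSgp h⟩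

end Kunz

/-- S of multiplicity 3 is an intersection of pseudosymmetric
numerical semigroups with multiplicity 3 iff S is 3-pseudosymmetric, or S is
not 3-irreducible with x1 even and x2 odd. -/
theorem stmt13 (S : Set ℕ) (x1 x2 : ℕ) (hS : IsNumSgp S) (hm : nsMult S = 3)
    (h1 : nsApery S 3 1 = 3 * x1 + 1) (h2 : nsApery S 3 2 = 3 * x2 + 2) :
    (∃ F : Set (Set ℕ), F.Nonempty ∧ F.Finite ∧
        (∀ T ∈ F, IsNumSgp T ∧ nsMult T = 3 ∧ nsPseudoSym T) ∧ S = ⋂₀ F) ↔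
      (nsMPseudoSym 3 S ∨ (¬ nsMIrr 3 S ∧ Even x1 ∧ Odd x2)) := by
  have hS_eq := eq_kunzSgp_of_nsApery hS (hm ▸ hS.nsMult_mem) h1 h2
  subst hS_eq
  have hadm := kunzAdmissible_iff.mpr ⟨hS, hm⟩
  rw [nsMPseudoSym_three_kunzSgp_iff hadm, not_nsMIrr_three_kunzSgp_iff hadm]
  exact exists_pseudoSym_sInter_eq_kunzSgp_iff hadm
end
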